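/- The determinant of the (n+1)×(n+1) matrix 𝓜ᴮ_n (type B) is a polynomial of degree exactly n^2 in t, for n ≥ 1. -/

import Mathlib

open Polynomial

/-- The `(n+1) × (n+1)` matrix `𝓜ᴮ_n` over `ℤ[t]`: its `(i, n+1)` entry (1-based) is
`t^{(n-i+1)^2}`, and for `j ≤ n` its `(i,j)` entry is `t^{C(j-i+1,2)}` when
`j - i + 1 ≥ 0` and `0` otherwise. -/
noncomputable def MatB (n : ℕ) : Matrix (Fin (n + 1)) (Fin (n + 1)) (Polynomial ℤ) :=
  Matrix.of fun i j =>
    if (j : ℕ) = n then (X : Polynomial ℤ) ^ ((n - (i : ℕ)) ^ 2)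
    else if (i : ℕ) ≤ (j : ℕ) + 1 then (X : Polynomial ℤ) ^ (((j : ℕ) + 1 - (i : ℕ)).choose 2)
    else 0

/-!
Expand the determinant over permutations, indexing rows and columns by `0, …, n`. A permutation
`σ` with `∏ᵢ M (σ i) i ≠ 0` satisfies `σ j ≤ j + 1` for `j < n`, so the drops `j + 1 - σ j`
are natural numbers summing to `a = σ n`, and the term has degree
`(n - a)² + ∑ C(j + 1 - σ j, 2) ≤ (n - a)² + C(a, 2)`, by superadditivity of `C(·, 2)`.
This is `< n²` unless `a = 0`, and then every drop vanishes, so `σ` is the cyclic rotation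
`j ↦ j + 1`, whose term is `X ^ n²`.
-/

namespace Nat

theorem add_choose_two (a b : ℕ) : (a + b).choose 2 = a.choose 2 + b.choose 2 + a * b := by
  have h : ((a + b).choose 2 : ℚ) = a.choose 2 + b.choose 2 + a * b := by
    push_cast [Nat.cast_choose_two]
    ring
  exact_mod_cast h

theorem sum_choose_two_le {ι : Type*} (s : Finset ι) (f : ι → ℕ) :
    ∑ i ∈ s, (f i).choose 2 ≤ (∑ i ∈ s, f i).choose 2 := by
  classical
  induction s using Finset.induction_on with
  | empty => simp
  | insert a s ha ih =>
    rw [Finset.sum_insert ha, Finset.sum_insert ha, add_choose_two]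
    lia

theorem sub_sq_add_choose_two_lt {n a : ℕ} (ha : 1 ≤ a) (han : a ≤ n) :
    (n - a) ^ 2 + a.choose 2 < n ^ 2 := by
  obtain ⟨m, rfl⟩ : ∃ m, n = m + a := ⟨n - a, by omega⟩
  have hchoose : a.choose 2 < a ^ 2 := by
    rw [Nat.choose_two_right, sq]
    exact (Nat.div_le_self _ _).trans_lt (Nat.mul_lt_mul_of_pos_left (by omega) (by omega))
  rw [Nat.add_sub_cancel]
  nlinarith

end Nat

namespace Polynomial

variable {R : Type*}

theorem degree_units_int_smul [Ring R] (u : ℤˣ) (p : R[X]) : (u • p).degree = p.degree := by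
  rcases Int.units_eq_one_or u with rfl | rfl
  · rw [one_smul]
  · rw [Units.neg_smul, one_smul, degree_neg]

theorem degree_sum_eq_of_degree_lt [Semiring R] {ι : Type*} [DecidableEq ι] {s : Finset ι}
    {f : ι → R[X]} {i₀ : ι} {d : ℕ} (hi₀ : i₀ ∈ s) (h₀ : (f i₀).degree = d)
    (h : ∀ i ∈ s, i ≠ i₀ → (f i).degree < d) :
    (∑ i ∈ s, f i).degree = d := by
  rw [← Finset.add_sum_erase s f hi₀, ← h₀]
  refine degree_add_eq_left_of_degree_lt ((degree_sum_le _ _).trans_lt ?_)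
  rw [h₀]
  exact (Finset.sup_lt_iff (WithBot.bot_lt_coe d)).mpr fun i hi =>
    h i (Finset.mem_of_mem_erase hi) (Finset.ne_of_mem_erase hi)

theorem degree_det_eq_of_degree_lt [CommRing R] {ι : Type*} [Fintype ι] [DecidableEq ι]
    (M : Matrix ι ι R[X]) {σ₀ : Equiv.Perm ι} {d : ℕ} (h₀ : (∏ i, M (σ₀ i) i).degree = d)
    (h : ∀ σ ≠ σ₀, (∏ i, M (σ i) i).degree < d) :
    M.det.degree = d := by
  rw [Matrix.det_apply]
  refine degree_sum_eq_of_degree_lt (Finset.mem_univ σ₀) ?_ fun σ _ hσ => ?_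
  · rw [degree_units_int_smul, h₀]
  · rw [degree_units_int_smul]
    exact h σ hσ

end Polynomial

section MatB

variable {n : ℕ}

theorem MatB_apply_last (i : Fin (n + 1)) : MatB n i (Fin.last n) = X ^ ((n - i) ^ 2) := by
  simp [MatB]

theorem MatB_apply_castSucc_of_le {i : Fin (n + 1)} {k : Fin n} (h : (i : ℕ) ≤ k + 1) :
    MatB n i k.castSucc = X ^ ((k + 1 - i : ℕ).choose 2) := by
  simp [MatB, k.isLt.ne, h]

theorem MatB_apply_castSucc_of_lt {i : Fin (n + 1)} {k : Fin n} (h : (k : ℕ) + 1 < i) :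
    MatB n i k.castSucc = 0 := by
  simp [MatB, k.isLt.ne, h.not_ge]

variable {σ : Equiv.Perm (Fin (n + 1))}

theorem prod_MatB_of_le (h : ∀ k : Fin n, (σ k.castSucc : ℕ) ≤ k + 1) :
    ∏ i, MatB n (σ i) i =
      X ^ ((n - σ (Fin.last n)) ^ 2 + ∑ k : Fin n, (k + 1 - σ k.castSucc : ℕ).choose 2) := by
  rw [Fin.prod_univ_castSucc, MatB_apply_last,
    Finset.prod_congr rfl fun k _ => MatB_apply_castSucc_of_le (h k),
    Finset.prod_pow_eq_pow_sum, ← pow_add, add_comm]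

theorem sum_sub_apply_castSucc_eq (h : ∀ k : Fin n, (σ k.castSucc : ℕ) ≤ k + 1) :
    ∑ k : Fin n, (k + 1 - σ k.castSucc : ℕ) = σ (Fin.last n) := by
  have hσ : ∑ k : Fin n, (σ k.castSucc : ℕ) + σ (Fin.last n) = ∑ k : Fin n, ((k : ℕ) + 1) := by
    rw [← Fin.sum_univ_castSucc (fun j => (σ j : ℕ)), Equiv.sum_comp σ (fun j => (j : ℕ)),
      Fin.sum_univ_succ]
    simp
  have hdrop : ∑ k : Fin n, ((k + 1 - σ k.castSucc : ℕ) + σ k.castSucc) =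
      ∑ k : Fin n, ((k : ℕ) + 1) :=
    Finset.sum_congr rfl fun k _ => Nat.sub_add_cancel (h k)
  rw [Finset.sum_add_distrib] at hdrop
  omega

theorem eq_finRotate_of_le (h : ∀ k : Fin n, (σ k.castSucc : ℕ) ≤ k + 1)
    (hlast : (σ (Fin.last n) : ℕ) = 0) : σ = finRotate (n + 1) := by
  have hdrop := Finset.sum_eq_zero_iff.mp ((sum_sub_apply_castSucc_eq h).trans hlast)
  ext j
  induction j using Fin.lastCases with
  | last => simpa [finRotate_last] using hlast
  | cast k =>
    have := hdrop k (Finset.mem_univ k)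
    have := h k
    rw [coe_finRotate_of_ne_last (Fin.castSucc_ne_last k), Fin.val_castSucc]
    omega

theorem prod_MatB_finRotate : ∏ i, MatB n (finRotate (n + 1) i) i = X ^ (n ^ 2) := by
  have hrot (k : Fin n) : (finRotate (n + 1) k.castSucc : ℕ) = k + 1 :=
    coe_finRotate_of_ne_last (Fin.castSucc_ne_last k)
  rw [prod_MatB_of_le fun k => (hrot k).le]
  simp

theorem degree_prod_MatB_lt (hσ : σ ≠ finRotate (n + 1)) :
    (∏ i, MatB n (σ i) i).degree < (n ^ 2 : ℕ) := by
  by_cases h : ∀ k : Fin n, (σ k.castSucc : ℕ) ≤ k + 1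
  · have ha : (σ (Fin.last n) : ℕ) ≠ 0 := fun h0 => hσ (eq_finRotate_of_le h h0)
    have han : (σ (Fin.last n) : ℕ) ≤ n := Fin.is_le _
    rw [prod_MatB_of_le h, degree_X_pow, Nat.cast_lt]
    calc _ ≤ (n - σ (Fin.last n)) ^ 2 + (σ (Fin.last n) : ℕ).choose 2 := by
          grw [Nat.sum_choose_two_le, sum_sub_apply_castSucc_eq h]
      _ < n ^ 2 := Nat.sub_sq_add_choose_two_lt (by omega) han
  · push Not at h
    obtain ⟨k, hk⟩ := h
    rw [Finset.prod_eq_zero (f := fun i => MatB n (σ i) i) (Finset.mem_univ k.castSucc)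
      (MatB_apply_castSucc_of_lt hk), degree_zero]
    exact WithBot.bot_lt_coe _

end MatB

theorem det_MatB_degree_general (n : ℕ) :
    (MatB n).det.degree = ((n ^ 2 : ℕ) : WithBot ℕ) :=
  degree_det_eq_of_degree_lt (MatB n) (by rw [prod_MatB_finRotate, degree_X_pow])
    fun _ hσ => degree_prod_MatB_lt hσ

/-- `det 𝓜ᴮ_n` is a polynomial of degree exactly `n²`, for `n ≥ 1`. -/
theorem det_MatB_degree (n : ℕ) (hn : 1 ≤ n) :
    (MatB n).det.degree = ((n ^ 2 : ℕ) : WithBot ℕ) :=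
  det_MatB_degree_general n
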